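/- arXiv:1412.5374 — 3 statements merged into one kernel-verified Lean document; each statement's English description precedes it below -/
import Mathlib

section
/- Let X and Y be finitely supported discrete random variables. Then I(X;Y) ≤ log((min{|𝒳|,|𝒴|} − 1)·ρ_m(X;Y)² + 1), where I(X;Y) is the mutual information (in bits) and ρ_m is the maximal correlation. -/
open BigOperators Finset
open scoped Classical

/-- Hirschfeld–Gebelein–Rényi maximal correlation of a joint pmf `p` on `X × Y`:
the supremum of `E[f(X) g(Y)]` over zero-mean, unit-second-moment `f`, `g`
(`sSup ∅ = 0` if no such functions exist). -/
noncomputable def maxCorr {X Y : Type*} [Fintype X] [Fintype Y] (p : X → Y → ℝ) : ℝ :=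
  sSup {r : ℝ | ∃ f : X → ℝ, ∃ g : Y → ℝ,
    (∑ x, ∑ y, p x y * f x) = 0 ∧
    (∑ x, ∑ y, p x y * g y) = 0 ∧
    (∑ x, ∑ y, p x y * (f x) ^ 2) = 1 ∧
    (∑ x, ∑ y, p x y * (g y) ^ 2) = 1 ∧
    r = ∑ x, ∑ y, p x y * f x * g y}

/-- Spectral (operator) norm of a real matrix. -/
noncomputable def specNorm {X Y : Type*} [Fintype X] [Fintype Y] (B : Matrix X Y ℝ) : ℝ :=
  sSup {r : ℝ | ∃ v : Y → ℝ, (∑ y, (v y) ^ 2) = 1 ∧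
    r = Real.sqrt (∑ x, (B.mulVec v x) ^ 2)}

/-!
Write `q`, `r` for the marginals of `p` and `M x y = (p x y - q x r y) / √(q x r y)`. Jensen's
inequality for the concave logarithm bounds `I(X;Y)` by `log E[p / (q r)] = log (1 + ‖M‖_F²)`.
The matrix `M` kills the unit vector `√r`, and for a unit vector `v ⊥ √r` the functions
`g = v / √r` and `f = (M v) / √q` are centred with `E[g²] = 1` and `E[f g] = E[f²] = ‖M v‖²`,
so `‖M v‖² ≤ ‖M v‖ ρ_m`. Expanding `‖M‖_F²` in an orthonormal basis that starts with `√r` gives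
`‖M‖_F² ≤ (|𝒴| - 1) ρ_m²`, and the same with `|𝒳|` by symmetry.
-/

open Matrix
open scoped RealInnerProductSpace

theorem Real.sum_mul_log_le_log_sum_mul {ι : Type*} (s : Finset ι) {w a : ι → ℝ}
    (hw : ∀ i ∈ s, 0 ≤ w i) (hw1 : ∑ i ∈ s, w i = 1) (ha : ∀ i ∈ s, 0 < w i → 0 < a i) :
    ∑ i ∈ s, w i * Real.log (a i) ≤ Real.log (∑ i ∈ s, w i * a i) := by
  set t := s.filter fun i => 0 < w i
  have sum_filter_pos (F : ι → ℝ) : ∑ i ∈ t, w i * F i = ∑ i ∈ s, w i * F i := by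
    refine sum_subset (filter_subset _ _) fun i hi hit => ?_
    have : w i = 0 := le_antisymm (by simpa [t, hi] using hit) (hw i hi)
    rw [this, zero_mul]
  have hw1' : ∑ i ∈ t, w i = 1 := by simpa using (sum_filter_pos 1).trans (by simpa using hw1)
  rw [← sum_filter_pos, ← sum_filter_pos]
  simpa only [smul_eq_mul] using strictConcaveOn_log_Ioi.concaveOn.le_map_sum
    (fun i hi => hw i (mem_filter.1 hi).1) hw1'
    fun i hi => ha i (mem_filter.1 hi).1 (mem_filter.1 hi).2

theorem Real.sum_mul_logb_le_logb_sum_mul {ι : Type*} (s : Finset ι) {b : ℝ} (hb : 1 < b)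
    {w a : ι → ℝ} (hw : ∀ i ∈ s, 0 ≤ w i) (hw1 : ∑ i ∈ s, w i = 1)
    (ha : ∀ i ∈ s, 0 < w i → 0 < a i) :
    ∑ i ∈ s, w i * Real.logb b (a i) ≤ Real.logb b (∑ i ∈ s, w i * a i) := by
  simp only [Real.logb, mul_div_assoc', ← sum_div]
  exact div_le_div_of_nonneg_right (Real.sum_mul_log_le_log_sum_mul s hw hw1 ha)
    (Real.log_pos hb).le

theorem Matrix.sum_sq_le_card_sub_one_mul_of_mulVec_eq_zero {X Y : Type*} [Fintype X]
    [Fintype Y] (A : Matrix X Y ℝ) {u : Y → ℝ} (hu : u ⬝ᵥ u = 1) (hAu : A *ᵥ u = 0) {c : ℝ}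
    (hc : ∀ v : Y → ℝ, v ⬝ᵥ v = 1 → u ⬝ᵥ v = 0 → A *ᵥ v ⬝ᵥ A *ᵥ v ≤ c) :
    ∑ x, ∑ y, A x y ^ 2 ≤ (Fintype.card Y - 1) * c := by
  obtain ⟨y₀⟩ : Nonempty Y := by
    by_contra h
    simp [not_nonempty_iff.1 h, dotProduct] at hu
  have norm_eq (v : EuclideanSpace ℝ Y) : ‖v‖ ^ 2 = v.ofLp ⬝ᵥ v.ofLp := by
    rw [EuclideanSpace.real_norm_sq_eq]
    simp [dotProduct, sq]
  have hunit : Orthonormal ℝ (({y₀} : Set Y).domRestrict fun _ => WithLp.toLp 2 u) := by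
    refine ⟨fun _ => ?_, fun i j hij => absurd (Subsingleton.elim i j) hij⟩
    rw [← pow_eq_one_iff_of_nonneg (norm_nonneg _) two_ne_zero, Set.domRestrict_apply, norm_eq]
    exact hu
  obtain ⟨b, hb⟩ := hunit.exists_orthonormalBasis_extension_of_card_eq finrank_euclideanSpace
  have hb₀ : b y₀ = WithLp.toLp 2 u := hb y₀ rfl
  have hrow (x : X) (i : Y) : ⟪b i, WithLp.toLp 2 (A x)⟫ = (A *ᵥ (b i).ofLp) x := by
    simp [EuclideanSpace.inner_eq_star_dotProduct, Matrix.mulVec]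
  calc ∑ x, ∑ y, A x y ^ 2 = ∑ x, ∑ i, ⟪b i, WithLp.toLp 2 (A x)⟫ ^ 2 := by
        simp [b.sum_sq_inner_right, EuclideanSpace.real_norm_sq_eq]
    _ = ∑ i, A *ᵥ (b i).ofLp ⬝ᵥ A *ᵥ (b i).ofLp := by
        rw [sum_comm]
        simp [hrow, dotProduct, sq]
    _ = ∑ i ∈ univ.erase y₀, A *ᵥ (b i).ofLp ⬝ᵥ A *ᵥ (b i).ofLp := by
        rw [← add_sum_erase _ _ (mem_univ y₀), hb₀, hAu, zero_dotProduct, zero_add]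
    _ ≤ ∑ i ∈ univ.erase y₀, c := by
        refine sum_le_sum fun i hi => hc _ ?_ ?_
        · rw [← norm_eq, b.orthonormal.1 i, one_pow]
        · have h : ⟪b y₀, b i⟫ = 0 := b.orthonormal.2 (ne_of_mem_erase hi).symm
          rwa [hb₀, EuclideanSpace.inner_eq_star_dotProduct, star_trivial, dotProduct_comm] at h
    _ = (Fintype.card Y - 1) * c := by
        rw [sum_const, card_erase_of_mem (mem_univ _), card_univ, nsmul_eq_mul,
          Nat.cast_sub (Fintype.card_pos_iff.2 ⟨y₀⟩), Nat.cast_one]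

theorem le_sq_of_le_mul_sqrt {t a : ℝ} (ht : 0 ≤ t) (h : t ≤ a * √t) : t ≤ a ^ 2 := by
  nlinarith [Real.sq_sqrt ht, Real.sqrt_nonneg t, sq_nonneg (a - √t)]

section MaxCorr

variable {X Y : Type*} [Fintype X] [Fintype Y] {p : X → Y → ℝ}

theorem sq_sum_mul_mul_le (hp : ∀ x y, 0 ≤ p x y) (f : X → ℝ) (g : Y → ℝ) :
    (∑ x, ∑ y, p x y * f x * g y) ^ 2 ≤
      (∑ x, ∑ y, p x y * f x ^ 2) * ∑ x, ∑ y, p x y * g y ^ 2 := by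
  simp only [← Fintype.sum_prod_type']
  exact sum_sq_le_sum_mul_sum_of_sq_le_mul _ (fun z _ => mul_nonneg (hp ..) (sq_nonneg _))
    (fun z _ => mul_nonneg (hp ..) (sq_nonneg _)) fun z _ => le_of_eq (by ring)

theorem le_maxCorr (hp : ∀ x y, 0 ≤ p x y) {f : X → ℝ} {g : Y → ℝ}
    (hf0 : ∑ x, ∑ y, p x y * f x = 0) (hg0 : ∑ x, ∑ y, p x y * g y = 0)
    (hf1 : ∑ x, ∑ y, p x y * f x ^ 2 = 1) (hg1 : ∑ x, ∑ y, p x y * g y ^ 2 = 1) :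
    ∑ x, ∑ y, p x y * f x * g y ≤ maxCorr p := by
  refine le_csSup ⟨1, ?_⟩ ⟨f, g, hf0, hg0, hf1, hg1, rfl⟩
  rintro _ ⟨f, g, -, -, hf1, hg1, rfl⟩
  nlinarith [sq_sum_mul_mul_le hp f g]

theorem sum_mul_mul_le_maxCorr_mul_sqrt (hp : ∀ x y, 0 ≤ p x y) {f : X → ℝ} {g : Y → ℝ}
    (hf0 : ∑ x, ∑ y, p x y * f x = 0) (hg0 : ∑ x, ∑ y, p x y * g y = 0)
    (hg1 : ∑ x, ∑ y, p x y * g y ^ 2 = 1) :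
    ∑ x, ∑ y, p x y * f x * g y ≤ maxCorr p * √(∑ x, ∑ y, p x y * f x ^ 2) := by
  set s := √(∑ x, ∑ y, p x y * f x ^ 2)
  have hs : s ^ 2 = ∑ x, ∑ y, p x y * f x ^ 2 :=
    Real.sq_sqrt (sum_nonneg fun x _ => sum_nonneg fun y _ => mul_nonneg (hp x y) (sq_nonneg _))
  have hs_nonneg : 0 ≤ s := Real.sqrt_nonneg _
  rcases hs_nonneg.eq_or_lt with hs0 | hs0
  · rw [← hs0, mul_zero]
    nlinarith [sq_sum_mul_mul_le hp f g]
  have h := le_maxCorr hp (f := fun x => f x / s) ?_ hg0 ?_ hg1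
  · rw [← div_le_iff₀ hs0]
    simpa only [← mul_div_assoc, div_mul_eq_mul_div, ← sum_div] using h
  · simp only [← mul_div_assoc, ← sum_div, hf0, zero_div]
  · simp only [div_pow, ← mul_div_assoc, ← sum_div, ← hs]
    exact div_self (pow_pos hs0 2).ne'

theorem maxCorr_swap : maxCorr (fun y x => p x y) = maxCorr p := by
  unfold maxCorr
  congr 1
  ext r
  simp only [Set.mem_ofPred_eq]
  rw [exists_comm]
  refine exists_congr fun g => exists_congr fun f => ?_
  simp only [sum_comm (s := (univ : Finset Y)) (t := (univ : Finset X)), mul_right_comm _ (f _)]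
  tauto

end MaxCorr

section CenteredDTM

variable {X Y : Type*} [Fintype X] [Fintype Y]

-- The divergence transition matrix `p x y / √(q x r y)` minus its top singular component
-- `√(q x) √(r y)`, where `q`, `r` are the marginals.
noncomputable def centeredDTM (p : X → Y → ℝ) : Matrix X Y ℝ :=
  Matrix.of fun x y =>
    (p x y - (∑ y', p x y') * ∑ x', p x' y) / (√(∑ y', p x y') * √(∑ x', p x' y))

variable {p : X → Y → ℝ}

theorem centeredDTM_swap : centeredDTM (fun y x => p x y) = (centeredDTM p)ᵀ := by
  ext y x
  simp only [centeredDTM, of_apply, transpose_apply, mul_comm]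

theorem sum_sq_centeredDTM_add_one (hsum : ∑ x, ∑ y, p x y = 1)
    (hX : ∀ x, 0 < ∑ y, p x y) (hY : ∀ y, 0 < ∑ x, p x y) :
    ∑ x, ∑ y, centeredDTM p x y ^ 2 + 1 =
      ∑ x, ∑ y, p x y * (p x y / ((∑ y', p x y') * ∑ x', p x' y)) := by
  have hsq (x : X) (y : Y) : centeredDTM p x y ^ 2 =
      p x y * (p x y / ((∑ y', p x y') * ∑ x', p x' y)) - 2 * p x y +
        (∑ y', p x y') * ∑ x', p x' y := by
    have := hX x
    have := hY y
    rw [centeredDTM, of_apply, div_pow, mul_pow, Real.sq_sqrt (hX x).le, Real.sq_sqrt (hY y).le]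
    field_simp
    ring
  have hsum' : ∑ y, ∑ x, p x y = 1 := by rw [sum_comm, hsum]
  simp only [hsq, sum_add_distrib, sum_sub_distrib, ← mul_sum, ← sum_mul, hsum', hsum]
  ring

theorem centeredDTM_mulVec_sqrt_marginal (hsum : ∑ x, ∑ y, p x y = 1) (hY : ∀ y, 0 < ∑ x, p x y) :
    centeredDTM p *ᵥ (fun y => √(∑ x, p x y)) = 0 := by
  ext x
  have hterm (y : Y) : centeredDTM p x y * √(∑ x', p x' y) =
      (p x y - (∑ y', p x y') * ∑ x', p x' y) / √(∑ y', p x y') := by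
    have := Real.sqrt_pos.2 (hY y)
    rw [centeredDTM, of_apply]
    field_simp
  have hsum' : ∑ y, ∑ x, p x y = 1 := by rw [sum_comm, hsum]
  simp only [mulVec, dotProduct, hterm, ← sum_div, sum_sub_distrib, ← mul_sum, hsum', mul_one,
    sub_self, zero_div, Pi.zero_apply]

theorem centeredDTM_mulVec_apply (hX : ∀ x, 0 < ∑ y, p x y) (hY : ∀ y, 0 < ∑ x, p x y)
    {v : Y → ℝ} (hv0 : (fun y => √(∑ x, p x y)) ⬝ᵥ v = 0) (x : X) :
    (centeredDTM p *ᵥ v) x = (∑ y, p x y * (v y / √(∑ x', p x' y))) / √(∑ y, p x y) := by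
  have hterm (y : Y) : centeredDTM p x y * v y =
      p x y * (v y / √(∑ x', p x' y)) / √(∑ y', p x y') -
        √(∑ y', p x y') * (√(∑ x', p x' y) * v y) := by
    have := Real.sqrt_pos.2 (hX x)
    have := Real.sqrt_pos.2 (hY y)
    rw [centeredDTM, of_apply]
    field_simp
    rw [Real.sq_sqrt (hX x).le, Real.sq_sqrt (hY y).le]
    ring
  have hv0' : ∑ y, √(∑ x, p x y) * v y = 0 := hv0
  simp only [mulVec, dotProduct, hterm, sum_sub_distrib, ← sum_div, ← mul_sum, hv0', mul_zero,
    sub_zero]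

theorem dotProduct_centeredDTM_mulVec_le (hp : ∀ x y, 0 ≤ p x y) (hX : ∀ x, 0 < ∑ y, p x y)
    (hY : ∀ y, 0 < ∑ x, p x y) {v : Y → ℝ} (hv : v ⬝ᵥ v = 1)
    (hv0 : (fun y => √(∑ x, p x y)) ⬝ᵥ v = 0) :
    centeredDTM p *ᵥ v ⬝ᵥ centeredDTM p *ᵥ v ≤ maxCorr p ^ 2 := by
  set g : Y → ℝ := fun y => v y / √(∑ x, p x y)
  set h : X → ℝ := fun x => ∑ y, p x y * g y
  set f : X → ℝ := fun x => h x / ∑ y, p x y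
  have row_sum (F : X → ℝ) : ∑ x, ∑ y, p x y * F x = ∑ x, (∑ y, p x y) * F x := by
    simp only [← sum_mul]
  have col_sum (G : Y → ℝ) : ∑ x, ∑ y, p x y * G y = ∑ y, (∑ x, p x y) * G y := by
    rw [sum_comm]
    simp only [← sum_mul]
  have hqf (x : X) : (∑ y, p x y) * f x = h x := mul_div_cancel₀ _ (hX x).ne'
  have hMv (x : X) : (centeredDTM p *ᵥ v) x = √(∑ y, p x y) * f x := by
    rw [centeredDTM_mulVec_apply hX hY hv0]
    change h x / _ = _
    rw [← hqf x, mul_div_right_comm, Real.div_sqrt]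
  have hrg (y : Y) : (∑ x, p x y) * g y = √(∑ x, p x y) * v y := by
    change _ * (v y / _) = _
    rw [mul_div_assoc', mul_div_right_comm, Real.div_sqrt]
  have hrg2 (y : Y) : (∑ x, p x y) * g y ^ 2 = v y ^ 2 := by
    change _ * (v y / _) ^ 2 = _
    rw [div_pow, Real.sq_sqrt (hY y).le, mul_div_cancel₀ _ (hY y).ne']
  have hEg : ∑ x, ∑ y, p x y * g y = 0 := by
    rw [col_sum]
    simp only [hrg]
    exact hv0
  have hEf : ∑ x, ∑ y, p x y * f x = 0 := by
    rw [row_sum]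
    simp only [hqf]
    exact hEg
  have hEg2 : ∑ x, ∑ y, p x y * g y ^ 2 = 1 := by
    rw [col_sum]
    simp only [hrg2]
    simpa only [dotProduct, sq] using hv
  have hEf2 : centeredDTM p *ᵥ v ⬝ᵥ centeredDTM p *ᵥ v = ∑ x, ∑ y, p x y * f x ^ 2 := by
    simp only [dotProduct, hMv, row_sum, ← sq, mul_pow, fun x => Real.sq_sqrt (hX x).le]
  have hEfg : ∑ x, ∑ y, p x y * f x * g y = ∑ x, ∑ y, p x y * f x ^ 2 := by
    simp only [mul_right_comm (p _ _) (f _), ← sum_mul]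
    refine sum_congr rfl fun x _ => ?_
    change h x * f x = _
    rw [← hqf x]
    ring
  rw [hEf2]
  refine le_sq_of_le_mul_sqrt ?_ (hEfg ▸ sum_mul_mul_le_maxCorr_mul_sqrt hp hEf hEg hEg2)
  exact sum_nonneg fun x _ => sum_nonneg fun y _ => mul_nonneg (hp x y) (sq_nonneg _)

theorem sum_sq_centeredDTM_le (hp : ∀ x y, 0 ≤ p x y) (hsum : ∑ x, ∑ y, p x y = 1)
    (hX : ∀ x, 0 < ∑ y, p x y) (hY : ∀ y, 0 < ∑ x, p x y) :
    ∑ x, ∑ y, centeredDTM p x y ^ 2 ≤ (Fintype.card Y - 1) * maxCorr p ^ 2 := by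
  refine (centeredDTM p).sum_sq_le_card_sub_one_mul_of_mulVec_eq_zero ?_
    (centeredDTM_mulVec_sqrt_marginal hsum hY) fun v hv hv0 =>
      dotProduct_centeredDTM_mulVec_le hp hX hY hv hv0
  simp only [dotProduct, Real.mul_self_sqrt (hY _).le]
  rw [sum_comm, hsum]

theorem sum_sq_centeredDTM_le_min (hp : ∀ x y, 0 ≤ p x y) (hsum : ∑ x, ∑ y, p x y = 1)
    (hX : ∀ x, 0 < ∑ y, p x y) (hY : ∀ y, 0 < ∑ x, p x y) :
    ∑ x, ∑ y, centeredDTM p x y ^ 2 ≤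
      (((min (Fintype.card X) (Fintype.card Y) : ℕ) : ℝ) - 1) * maxCorr p ^ 2 := by
  rcases le_total (Fintype.card X) (Fintype.card Y) with hXY | hYX
  · have h := sum_sq_centeredDTM_le (p := fun y x => p x y) (fun y x => hp x y)
      (by rwa [sum_comm]) hY hX
    rw [centeredDTM_swap, maxCorr_swap, sum_comm] at h
    simpa only [min_eq_left hXY, transpose_apply] using h
  · rw [min_eq_right hYX]
    exact sum_sq_centeredDTM_le hp hsum hX hY

end CenteredDTM

theorem stmt4_general {X Y : Type*} [Fintype X] [Fintype Y]
    (p : X → Y → ℝ) (hp : ∀ x y, 0 ≤ p x y) (hsum : ∑ x, ∑ y, p x y = 1)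
    (hX : ∀ x, 0 < ∑ y, p x y) (hY : ∀ y, 0 < ∑ x, p x y) :
    (∑ x, ∑ y, p x y * Real.logb 2 (p x y / ((∑ y', p x y') * (∑ x', p x' y)))) ≤
    Real.logb 2 ((((min (Fintype.card X) (Fintype.card Y) : ℕ) : ℝ) - 1) *
      (maxCorr p) ^ 2 + 1) := by
  have jensen := Real.sum_mul_logb_le_logb_sum_mul univ one_lt_two
    (w := fun z : X × Y => p z.1 z.2)
    (a := fun z => p z.1 z.2 / ((∑ y', p z.1 y') * ∑ x', p x' z.2))
    (fun z _ => hp z.1 z.2) (by rwa [Fintype.sum_prod_type'])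
    fun z _ hz => div_pos hz (mul_pos (hX z.1) (hY z.2))
  simp only [Fintype.sum_prod_type, ← sum_sq_centeredDTM_add_one hsum hX hY] at jensen
  refine jensen.trans (Real.logb_le_logb_of_le one_lt_two (by positivity) ?_)
  linarith [sum_sq_centeredDTM_le_min hp hsum hX hY]

theorem stmt4 {X Y : Type*} [Fintype X] [Fintype Y]
    (p : X → Y → ℝ) (hp : ∀ x y, 0 ≤ p x y) (hsum : ∑ x, ∑ y, p x y = 1)
    (hX : ∀ x, 0 < ∑ y, p x y) (hY : ∀ y, 0 < ∑ x, p x y)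
    (hcX : 2 ≤ Fintype.card X) (hcY : 2 ≤ Fintype.card Y) :
    (∑ x, ∑ y, p x y * Real.logb 2 (p x y / ((∑ y', p x y') * (∑ x', p x' y)))) ≤
    Real.logb 2 ((((min (Fintype.card X) (Fintype.card Y) : ℕ) : ℝ) - 1) *
      (maxCorr p) ^ 2 + 1) :=
  stmt4_general p hp hsum hX hY
end

section
/- Let G be a d-regular (multi)graph on vertex set [1:2ⁿ] with adjacency matrix A, whose edges are labeled by an invertible encryption function E(k,m) (so the edges are (m, E(k,m)) for k ∈ [1:d], and D(k,E(k,m)) = m). Let M be uniform on [1:2ⁿ], K uniform on [1:d] independent of M, and C = E(K,M). Then ρ_m(M;C) = |λ₂(A)|/d, where |λ₂(A)| = ‖A − (d/2ⁿ)·𝟏‖ is the magnitude of the second-largest eigenvalue of A in absolute value. -/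
open BigOperators Finset
open scoped Classical

/-!
If `p` has uniform marginals on `X × Y` and `Q := p - 1/(|X||Y|)`, then `E[f(X) g(Y)] = ⟨f, Q g⟩`
whenever `f` has mean zero, and the normalisations say `‖f‖² = |X|`, `‖g‖² = |Y|`; Cauchy–Schwarz
gives `ρ ≤ √(|X||Y|) ‖Q‖`. Conversely `Q` kills constants on both sides, so replacing a test vector
`v` by its centring `v₀` keeps `Q v` and does not increase `‖v‖`, and the rescaled pair `(Q v₀, v₀)`
is admissible with correlation `√(|X||Y|) ‖Q v₀‖ / ‖v₀‖`. For the graph, `p = A / (2ⁿ d)` has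
uniform marginals since all row and column sums of `A` equal `d`, and `Q = (A - (d/2ⁿ) 𝟏) / (2ⁿ d)`.
-/

lemma Real.sSup_nonneg_of_neg_mem {S : Set ℝ} (hS : ∀ r ∈ S, -r ∈ S) : 0 ≤ sSup S := by
  obtain rfl | ⟨r, hr⟩ := S.eq_empty_or_nonempty
  · exact Real.sSup_empty.ge
  · refine Real.sSup_nonneg' ⟨|r|, ?_, abs_nonneg r⟩
    rcases abs_choice r with h | h <;> rw [h]
    exacts [hr, hS r hr]

open Matrix

section SpecNorm

variable {X Y : Type*} [Fintype X] [Fintype Y]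

lemma specNorm_nonneg (B : Matrix X Y ℝ) : 0 ≤ specNorm B :=
  Real.sSup_nonneg fun _ ⟨_, _, hr⟩ => hr ▸ Real.sqrt_nonneg _

lemma sqrt_sum_smul_mulVec_sq (c : ℝ) (B : Matrix X Y ℝ) (v : Y → ℝ) :
    √(∑ x, ((c • B) *ᵥ v) x ^ 2) = |c| * √(∑ x, (B *ᵥ v) x ^ 2) := by
  simp only [smul_mulVec, Pi.smul_apply, smul_eq_mul, mul_pow, ← Finset.mul_sum]
  rw [Real.sqrt_mul (sq_nonneg c), Real.sqrt_sq_eq_abs]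

lemma specNorm_smul (c : ℝ) (B : Matrix X Y ℝ) : specNorm (c • B) = |c| * specNorm B := by
  rw [specNorm, specNorm, ← smul_eq_mul, ← Real.sSup_smul_of_nonneg (abs_nonneg c)]
  congr 1
  ext r
  simp only [Set.mem_smul_set, Set.mem_ofPred_eq, sqrt_sum_smul_mulVec_sq, smul_eq_mul]
  constructor
  · rintro ⟨v, hv, rfl⟩
    exact ⟨_, ⟨v, hv, rfl⟩, rfl⟩
  · rintro ⟨_, ⟨v, hv, rfl⟩, rfl⟩
    exact ⟨v, hv, rfl⟩

lemma bddAbove_specNorm_set (B : Matrix X Y ℝ) :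
    BddAbove {r : ℝ | ∃ v : Y → ℝ, (∑ y, (v y) ^ 2) = 1 ∧ r = √(∑ x, (B *ᵥ v) x ^ 2)} := by
  refine ⟨√(∑ x, ∑ y, B x y ^ 2), ?_⟩
  rintro _ ⟨v, hv, rfl⟩
  refine Real.sqrt_le_sqrt (Finset.sum_le_sum fun x _ => ?_)
  simpa [hv, mulVec, dotProduct] using Finset.sum_mul_sq_le_sq_mul_sq univ (B x) v

lemma sqrt_sum_mulVec_sq_le (B : Matrix X Y ℝ) (v : Y → ℝ) :
    √(∑ x, (B *ᵥ v) x ^ 2) ≤ specNorm B * √(∑ y, v y ^ 2) := by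
  obtain hs | hs := (Real.sqrt_nonneg (∑ y, v y ^ 2)).eq_or_lt
  · have hv : v = 0 := by
      ext y
      rw [eq_comm, Real.sqrt_eq_zero (by positivity),
        Finset.sum_eq_zero_iff_of_nonneg fun _ _ => sq_nonneg _] at hs
      simpa using hs y (mem_univ y)
    simp [hv]
  have hunit : ∑ y, ((√(∑ y, v y ^ 2))⁻¹ • v) y ^ 2 = 1 := by
    simp only [Pi.smul_apply, smul_eq_mul, mul_pow, ← Finset.mul_sum]
    rw [inv_pow, Real.sq_sqrt (by positivity)]
    exact inv_mul_cancel₀ (Real.sqrt_pos.mp hs).ne'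
  have hle := le_csSup (bddAbove_specNorm_set B) ⟨_, hunit, rfl⟩
  rw [mulVec_smul, ← smul_mulVec, sqrt_sum_smul_mulVec_sq, abs_of_pos (inv_pos.mpr hs)] at hle
  rwa [inv_mul_le_iff₀ hs, mul_comm] at hle

end SpecNorm

lemma maxCorr_nonneg {X Y : Type*} [Fintype X] [Fintype Y] (p : X → Y → ℝ) : 0 ≤ maxCorr p := by
  refine Real.sSup_nonneg_of_neg_mem ?_
  rintro _ ⟨f, g, h1, h2, h3, h4, rfl⟩
  refine ⟨f, -g, h1, ?_, h3, ?_, ?_⟩ <;> simp [h2, h4]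

lemma sum_sub_mean_sq_le {Y : Type*} [Fintype Y] [Nonempty Y] (v : Y → ℝ) :
    ∑ y, (v y - (∑ y, v y) / Fintype.card Y) ^ 2 ≤ ∑ y, v y ^ 2 := by
  have hM : (Fintype.card Y : ℝ) ≠ 0 := Nat.cast_ne_zero.mpr Fintype.card_ne_zero
  have : ∑ y, (v y - (∑ y, v y) / Fintype.card Y) ^ 2
      = ∑ y, v y ^ 2 - (∑ y, v y) ^ 2 / Fintype.card Y := by
    simp only [sub_sq, Finset.sum_add_distrib, Finset.sum_sub_distrib, ← Finset.sum_mul,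
      ← Finset.mul_sum, Finset.sum_const, Finset.card_univ, nsmul_eq_mul]
    field_simp
    ring
  rw [this]
  exact sub_le_self _ (by positivity)

section UniformMarginals

variable {X Y : Type*} [Fintype X] [Fintype Y] {p : X → Y → ℝ}

variable (p) in
noncomputable def uniformDeviation : Matrix X Y ℝ :=
  of fun x y => p x y - ((Fintype.card X : ℝ) * Fintype.card Y)⁻¹

lemma sum_sum_mul_mul_eq_sum_mul_mulVec {f : X → ℝ} (hf : ∑ x, f x = 0) (g : Y → ℝ) :
    ∑ x, ∑ y, p x y * f x * g y = ∑ x, f x * (uniformDeviation p *ᵥ g) x := by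
  have h : ∀ x, f x * (uniformDeviation p *ᵥ g) x = ∑ y, p x y * f x * g y
      - (((Fintype.card X : ℝ) * Fintype.card Y)⁻¹ * ∑ y, g y) * f x := by
    intro x
    simp only [uniformDeviation, mulVec, dotProduct, of_apply, Finset.mul_sum, Finset.sum_mul,
      ← Finset.sum_sub_distrib]
    exact Finset.sum_congr rfl fun y _ => by ring
  rw [Finset.sum_congr rfl fun x _ => h x, Finset.sum_sub_distrib, ← Finset.mul_sum, hf,
    mul_zero, sub_zero]

lemma sum_sum_mul_left (hrow : ∀ x, ∑ y, p x y = (Fintype.card X : ℝ)⁻¹) (f : X → ℝ) :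
    ∑ x, ∑ y, p x y * f x = (Fintype.card X : ℝ)⁻¹ * ∑ x, f x := by
  simp only [← Finset.sum_mul, hrow, Finset.mul_sum]

lemma sum_sum_mul_right (hcol : ∀ y, ∑ x, p x y = (Fintype.card Y : ℝ)⁻¹) (g : Y → ℝ) :
    ∑ x, ∑ y, p x y * g y = (Fintype.card Y : ℝ)⁻¹ * ∑ y, g y := by
  rw [Finset.sum_comm]
  simp only [← Finset.sum_mul, hcol, Finset.mul_sum]

lemma uniformDeviation_mulVec_one [Nonempty Y] (hrow : ∀ x, ∑ y, p x y = (Fintype.card X : ℝ)⁻¹) :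
    uniformDeviation p *ᵥ 1 = 0 := by
  have hM : (Fintype.card Y : ℝ) ≠ 0 := Nat.cast_ne_zero.mpr Fintype.card_ne_zero
  ext x
  simp only [uniformDeviation, mulVec, dotProduct, Pi.one_apply, mul_one, of_apply,
    Finset.sum_sub_distrib, hrow, Finset.sum_const, Finset.card_univ, nsmul_eq_mul, Pi.zero_apply]
  field_simp
  ring

lemma one_vecMul_uniformDeviation [Nonempty X] (hcol : ∀ y, ∑ x, p x y = (Fintype.card Y : ℝ)⁻¹) :
    1 ᵥ* uniformDeviation p = 0 := by
  have hN : (Fintype.card X : ℝ) ≠ 0 := Nat.cast_ne_zero.mpr Fintype.card_ne_zero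
  ext y
  simp only [uniformDeviation, vecMul, dotProduct, Pi.one_apply, one_mul, of_apply,
    Finset.sum_sub_distrib, hcol, Finset.sum_const, Finset.card_univ, nsmul_eq_mul, Pi.zero_apply]
  field_simp
  ring

lemma sum_uniformDeviation_mulVec [Nonempty X] (hcol : ∀ y, ∑ x, p x y = (Fintype.card Y : ℝ)⁻¹)
    (v : Y → ℝ) : ∑ x, (uniformDeviation p *ᵥ v) x = 0 := by
  rw [← one_dotProduct, dotProduct_mulVec, one_vecMul_uniformDeviation hcol, zero_dotProduct]

lemma corr_le_sqrt_mul_specNorm (hrow : ∀ x, ∑ y, p x y = (Fintype.card X : ℝ)⁻¹)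
    (hcol : ∀ y, ∑ x, p x y = (Fintype.card Y : ℝ)⁻¹) {f : X → ℝ} {g : Y → ℝ}
    (hf : ∑ x, ∑ y, p x y * f x = 0) (hf2 : ∑ x, ∑ y, p x y * f x ^ 2 = 1)
    (hg2 : ∑ x, ∑ y, p x y * g y ^ 2 = 1) :
    ∑ x, ∑ y, p x y * f x * g y
      ≤ √((Fintype.card X : ℝ) * Fintype.card Y) * specNorm (uniformDeviation p) := by
  rw [sum_sum_mul_left hrow] at hf hf2
  rw [sum_sum_mul_right hcol] at hg2
  have hN : (Fintype.card X : ℝ)⁻¹ ≠ 0 := left_ne_zero_of_mul_eq_one hf2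
  rw [inv_mul_eq_one₀ (by simpa using hN)] at hf2
  rw [inv_mul_eq_one₀ (by simpa using left_ne_zero_of_mul_eq_one hg2)] at hg2
  calc ∑ x, ∑ y, p x y * f x * g y
      = ∑ x, f x * (uniformDeviation p *ᵥ g) x :=
        sum_sum_mul_mul_eq_sum_mul_mulVec ((mul_eq_zero_iff_left hN).mp hf) g
    _ ≤ √(∑ x, f x ^ 2) * √(∑ x, (uniformDeviation p *ᵥ g) x ^ 2) :=
        Real.sum_mul_le_sqrt_mul_sqrt _ _ _
    _ ≤ √(∑ x, f x ^ 2) * (specNorm (uniformDeviation p) * √(∑ y, g y ^ 2)) := by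
        gcongr
        exact sqrt_sum_mulVec_sq_le _ _
    _ = √((Fintype.card X : ℝ) * Fintype.card Y) * specNorm (uniformDeviation p) := by
        rw [← hf2, ← hg2, Real.sqrt_mul (by positivity)]
        ring

lemma maxCorr_le_sqrt_mul_specNorm (hrow : ∀ x, ∑ y, p x y = (Fintype.card X : ℝ)⁻¹)
    (hcol : ∀ y, ∑ x, p x y = (Fintype.card Y : ℝ)⁻¹) :
    maxCorr p ≤ √((Fintype.card X : ℝ) * Fintype.card Y) * specNorm (uniformDeviation p) := by
  refine Real.sSup_le ?_ (mul_nonneg (Real.sqrt_nonneg _) (specNorm_nonneg _))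
  rintro _ ⟨f, g, hf, -, hf2, hg2, rfl⟩
  exact corr_le_sqrt_mul_specNorm hrow hcol hf hf2 hg2

lemma sum_mul_mulVec_le_maxCorr [Nonempty X] [Nonempty Y]
    (hrow : ∀ x, ∑ y, p x y = (Fintype.card X : ℝ)⁻¹)
    (hcol : ∀ y, ∑ x, p x y = (Fintype.card Y : ℝ)⁻¹) {f : X → ℝ} {g : Y → ℝ}
    (hf : ∑ x, f x = 0) (hg : ∑ y, g y = 0)
    (hf2 : ∑ x, f x ^ 2 = Fintype.card X) (hg2 : ∑ y, g y ^ 2 = Fintype.card Y) :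
    ∑ x, f x * (uniformDeviation p *ᵥ g) x ≤ maxCorr p := by
  have hN : (Fintype.card X : ℝ) ≠ 0 := Nat.cast_ne_zero.mpr Fintype.card_ne_zero
  have hM : (Fintype.card Y : ℝ) ≠ 0 := Nat.cast_ne_zero.mpr Fintype.card_ne_zero
  rw [← sum_sum_mul_mul_eq_sum_mul_mulVec hf]
  refine le_csSup ⟨√((Fintype.card X : ℝ) * Fintype.card Y) * specNorm (uniformDeviation p), ?_⟩
    ⟨f, g, ?_, ?_, ?_, ?_, rfl⟩
  · rintro _ ⟨f, g, hf, -, hf2, hg2, rfl⟩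
    exact corr_le_sqrt_mul_specNorm hrow hcol hf hf2 hg2
  · rw [sum_sum_mul_left hrow, hf, mul_zero]
  · rw [sum_sum_mul_right hcol, hg, mul_zero]
  · rw [sum_sum_mul_left hrow, hf2, inv_mul_cancel₀ hN]
  · rw [sum_sum_mul_right hcol, hg2, inv_mul_cancel₀ hM]

lemma sqrt_mul_mul_sqrt_sum_mulVec_sq_le [Nonempty X] [Nonempty Y]
    (hrow : ∀ x, ∑ y, p x y = (Fintype.card X : ℝ)⁻¹)
    (hcol : ∀ y, ∑ x, p x y = (Fintype.card Y : ℝ)⁻¹) {g : Y → ℝ} (hg : ∑ y, g y = 0) :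
    √((Fintype.card X : ℝ) * Fintype.card Y) * √(∑ x, (uniformDeviation p *ᵥ g) x ^ 2)
      ≤ maxCorr p * √(∑ y, g y ^ 2) := by
  set w := uniformDeviation p *ᵥ g
  have hab := sqrt_sum_mulVec_sq_le (uniformDeviation p) g
  have hw2 : ∑ x, w x ^ 2 = √(∑ x, w x ^ 2) ^ 2 := (Real.sq_sqrt (by positivity)).symm
  have hg2 : ∑ y, g y ^ 2 = √(∑ y, g y ^ 2) ^ 2 := (Real.sq_sqrt (by positivity)).symm
  have ha0 : 0 ≤ √(∑ x, w x ^ 2) := Real.sqrt_nonneg _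
  have hb0 : 0 ≤ √(∑ y, g y ^ 2) := Real.sqrt_nonneg _
  generalize √(∑ x, w x ^ 2) = a at *
  generalize √(∑ y, g y ^ 2) = b at *
  obtain rfl | ha := ha0.eq_or_lt
  · rw [mul_zero]
    exact mul_nonneg (maxCorr_nonneg p) (by nlinarith [specNorm_nonneg (uniformDeviation p)])
  have hb : 0 < b := by nlinarith [specNorm_nonneg (uniformDeviation p)]
  have hN : (0 : ℝ) < Fintype.card X := Nat.cast_pos.mpr Fintype.card_pos
  have hM : (0 : ℝ) < Fintype.card Y := Nat.cast_pos.mpr Fintype.card_pos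
  have hcorr := sum_mul_mulVec_le_maxCorr hrow hcol
    (f := (√(Fintype.card X : ℝ) / a) • w) (g := (√(Fintype.card Y : ℝ) / b) • g) ?_ ?_ ?_ ?_
  · have hval : ∑ x, ((√(Fintype.card X : ℝ) / a) • w) x
          * (uniformDeviation p *ᵥ ((√(Fintype.card Y : ℝ) / b) • g)) x
        = √((Fintype.card X : ℝ) * Fintype.card Y) * a / b := by
      simp only [mulVec_smul, Pi.smul_apply, smul_eq_mul]
      calc _ = √(Fintype.card X : ℝ) / a * (√(Fintype.card Y : ℝ) / b) * ∑ x, w x ^ 2 := by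
            rw [Finset.mul_sum]
            exact Finset.sum_congr rfl fun x _ => by ring
        _ = _ := by
            rw [hw2, Real.sqrt_mul hN.le]
            field_simp
    rw [hval, div_le_iff₀ hb] at hcorr
    exact hcorr
  · simp only [w, Pi.smul_apply, smul_eq_mul, ← Finset.mul_sum, sum_uniformDeviation_mulVec hcol,
      mul_zero]
  · simp only [Pi.smul_apply, smul_eq_mul, ← Finset.mul_sum, hg, mul_zero]
  · simp only [Pi.smul_apply, smul_eq_mul, mul_pow, ← Finset.mul_sum]
    rw [div_pow, Real.sq_sqrt hN.le, hw2]
    field_simp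
  · simp only [Pi.smul_apply, smul_eq_mul, mul_pow, ← Finset.mul_sum]
    rw [div_pow, Real.sq_sqrt hM.le, hg2]
    field_simp

lemma sqrt_mul_specNorm_le_maxCorr [Nonempty X] [Nonempty Y]
    (hrow : ∀ x, ∑ y, p x y = (Fintype.card X : ℝ)⁻¹)
    (hcol : ∀ y, ∑ x, p x y = (Fintype.card Y : ℝ)⁻¹) :
    √((Fintype.card X : ℝ) * Fintype.card Y) * specNorm (uniformDeviation p) ≤ maxCorr p := by
  have hNM : 0 < √((Fintype.card X : ℝ) * Fintype.card Y) :=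
    Real.sqrt_pos.mpr (by simp [Fintype.card_pos])
  rw [← le_div_iff₀' hNM]
  refine Real.sSup_le ?_ (div_nonneg (maxCorr_nonneg p) hNM.le)
  rintro _ ⟨v, hv, rfl⟩
  rw [le_div_iff₀' hNM]
  set v₀ := v - ((∑ y, v y) / Fintype.card Y) • (1 : Y → ℝ)
  have hQv₀ : uniformDeviation p *ᵥ v₀ = uniformDeviation p *ᵥ v := by
    rw [mulVec_sub, mulVec_smul, uniformDeviation_mulVec_one hrow, smul_zero, sub_zero]
  have hv₀ : ∑ y, v₀ y = 0 := by
    have hM : (Fintype.card Y : ℝ) ≠ 0 := Nat.cast_ne_zero.mpr Fintype.card_ne_zero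
    simp only [v₀, Pi.sub_apply, Pi.smul_apply, Pi.one_apply, smul_eq_mul, mul_one,
      Finset.sum_sub_distrib, Finset.sum_const, Finset.card_univ, nsmul_eq_mul]
    field_simp
    ring
  have hv₀2 : √(∑ y, v₀ y ^ 2) ≤ 1 := by
    rw [← Real.sqrt_one, ← hv]
    exact Real.sqrt_le_sqrt (by simpa [v₀] using sum_sub_mean_sq_le v)
  calc √((Fintype.card X : ℝ) * Fintype.card Y) * √(∑ x, (uniformDeviation p *ᵥ v) x ^ 2)
      = √((Fintype.card X : ℝ) * Fintype.card Y) * √(∑ x, (uniformDeviation p *ᵥ v₀) x ^ 2) := by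
        rw [hQv₀]
    _ ≤ maxCorr p * √(∑ y, v₀ y ^ 2) := sqrt_mul_mul_sqrt_sum_mulVec_sq_le hrow hcol hv₀
    _ ≤ maxCorr p := mul_le_of_le_one_right (maxCorr_nonneg p) hv₀2

theorem maxCorr_eq_sqrt_mul_specNorm [Nonempty X] [Nonempty Y]
    (hrow : ∀ x, ∑ y, p x y = (Fintype.card X : ℝ)⁻¹)
    (hcol : ∀ y, ∑ x, p x y = (Fintype.card Y : ℝ)⁻¹) :
    maxCorr p = √((Fintype.card X : ℝ) * Fintype.card Y) * specNorm (uniformDeviation p) :=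
  (maxCorr_le_sqrt_mul_specNorm hrow hcol).antisymm (sqrt_mul_specNorm_le_maxCorr hrow hcol)

end UniformMarginals

lemma maxCorr_eq_specNorm_of_regular {X : Type*} [Fintype X] [Nonempty X] (A : X → X → ℝ)
    {d : ℝ} (hd : 0 < d) (hrow : ∀ x, ∑ y, A x y = d) (hcol : ∀ y, ∑ x, A x y = d) :
    maxCorr (fun x y => (Fintype.card X : ℝ)⁻¹ * d⁻¹ * A x y)
      = 1 / d * specNorm (of fun x y => A x y - d / Fintype.card X) := by
  have hN : (0 : ℝ) < Fintype.card X := Nat.cast_pos.mpr Fintype.card_pos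
  have hdev : uniformDeviation (fun x y => (Fintype.card X : ℝ)⁻¹ * d⁻¹ * A x y)
      = ((Fintype.card X : ℝ)⁻¹ * d⁻¹) • of fun x y => A x y - d / Fintype.card X := by
    ext x y
    simp only [uniformDeviation, of_apply, Matrix.smul_apply, smul_eq_mul]
    field_simp
  rw [maxCorr_eq_sqrt_mul_specNorm, hdev, specNorm_smul, Real.sqrt_mul_self hN.le,
    abs_of_pos (by positivity)]
  · field_simp
  · intro x
    rw [← Finset.mul_sum, hrow]
    field_simp
  · intro y
    rw [← Finset.mul_sum, hcol]
    field_simp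

lemma sum_card_filter_eq {α β : Type*} [Fintype α] [Fintype β] [DecidableEq β] (f : α → β) :
    ∑ b, (univ.filter fun a => f a = b).card = Fintype.card α := by
  rw [sum_card_fiberwise_eq_card_filter, filter_true_of_mem fun _ _ => mem_univ _, card_univ]

theorem stmt6_general (n d : ℕ) (hd : 0 < d)
    (E : Fin d → Fin (2 ^ n) → Fin (2 ^ n))
    (hsym : ∀ m c : Fin (2 ^ n),
      (univ.filter fun k => E k m = c).card = (univ.filter fun k => E k c = m).card) :
    maxCorr (fun (m c : Fin (2 ^ n)) =>
        ((2 ^ n : ℝ))⁻¹ * (d : ℝ)⁻¹ * ((univ.filter fun k => E k m = c).card : ℝ)) =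
    (1 / (d : ℝ)) * specNorm (Matrix.of fun m c =>
        ((univ.filter fun k => E k m = c).card : ℝ) - (d : ℝ) / (2 ^ n : ℝ)) := by
  have hrow : ∀ m, ∑ c, ((univ.filter fun k => E k m = c).card : ℝ) = d := fun m => by
    exact_mod_cast (sum_card_filter_eq fun k => E k m).trans (Fintype.card_fin d)
  have hcol : ∀ c, ∑ m, ((univ.filter fun k => E k m = c).card : ℝ) = d := fun c => by
    simpa only [hsym _ c] using hrow c
  have h := maxCorr_eq_specNorm_of_regular _ (Nat.cast_pos.mpr hd) hrow hcol
  rwa [Fintype.card_fin, Nat.cast_pow, Nat.cast_ofNat] at h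

theorem stmt6 (n d : ℕ) (hd : 0 < d)
    (E : Fin d → Fin (2 ^ n) → Fin (2 ^ n)) (D : Fin d → Fin (2 ^ n) → Fin (2 ^ n))
    (hD : ∀ k m, D k (E k m) = m)
    (hsym : ∀ m c : Fin (2 ^ n),
      (univ.filter fun k => E k m = c).card = (univ.filter fun k => E k c = m).card) :
    maxCorr (fun (m c : Fin (2 ^ n)) =>
        ((2 ^ n : ℝ))⁻¹ * (d : ℝ)⁻¹ * ((univ.filter fun k => E k m = c).card : ℝ)) =
    (1 / (d : ℝ)) * specNorm (Matrix.of fun m c =>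
        ((univ.filter fun k => E k m = c).card : ℝ) - (d : ℝ) / (2 ^ n : ℝ)) :=
  stmt6_general n d hd E hsym
end

section
/- Let n ≥ 1, s ≥ 1, ρ > 0, ε > 0 with s ≥ 2log₂(1/ρ) + log₂ n + log₂(1 + (1/n)log₂(1/ε)) + 2. If the keystream bits G_i(k), i ∈ [1:n], k ∈ [1:2ˢ], are i.i.d. Bernoulli(1/2), then with probability greater than 1−ε (over the random choice of keystream generator), the binary additive stream cipher C = M ⊕ G(K) with M uniform on {0,1}ⁿ and K uniform on [1:2ˢ] satisfies ρ_m(M;C) ≤ ρ. -/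
open BigOperators Finset
open scoped Classical

/-!
Write `S_v(G) = ∑_k (-1)^⟨v, G k⟩`. For fixed `v ≠ 0` the signs `(-1)^⟨v, G k⟩` of a uniformly
random generator are independent and uniform, so Chernoff's bound makes `|S_v(G)| > ρ 2ˢ` hold
for at most a fraction `2 exp (-ρ² 2ˢ / 2)` of generators; after a union bound over the `2ⁿ`
choices of `v`, the hypothesis on `s` makes the total fraction smaller than `ε`.

For every other generator, expanding `f` and `g` in the Walsh basis gives
`E f(M) g(C) = 4⁻ⁿ 2⁻ˢ ∑_v f̂(v) ĝ(v) S_v(G)`. The term `v = 0` vanishes because `E f = 0`, and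
`|f̂ ĝ| ≤ (f̂² + ĝ²) / 2` together with Parseval bounds the rest by `ρ`.
-/

open Real

lemma card_lt_abs_le_exp_mul_sum_cosh {Ω : Type*} [Fintype Ω] (S : Ω → ℝ) (a : ℝ) {t : ℝ}
    (ht : 0 ≤ t) :
    ((univ.filter fun ω => a < |S ω|).card : ℝ)
      ≤ 2 * exp (-(t * a)) * ∑ ω, cosh (t * S ω) := by
  rw [natCast_card_filter, mul_sum]
  refine sum_le_sum fun ω _ => ?_
  split_ifs with ha
  · have hexp : exp (t * a) ≤ 2 * cosh (t * S ω) := calc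
      exp (t * a) ≤ exp |t * S ω| := by rw [abs_mul, abs_of_nonneg ht]; gcongr
      _ ≤ 2 * cosh |t * S ω| := by rw [cosh_eq]; linarith [exp_pos (-|t * S ω|)]
      _ = 2 * cosh (t * S ω) := by rw [cosh_abs]
    calc (1 : ℝ) = exp (-(t * a)) * exp (t * a) := by rw [← exp_add, neg_add_cancel, exp_zero]
      _ ≤ exp (-(t * a)) * (2 * cosh (t * S ω)) := by gcongr
      _ = _ := by ring
  · positivity

namespace Walsh
variable {n : ℕ}

noncomputable def walsh (v x : Fin n → ZMod 2) : ℝ := (-1) ^ (v ⬝ᵥ x).val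

lemma walsh_add (v x y : Fin n → ZMod 2) : walsh v (x + y) = walsh v x * walsh v y := by
  rw [walsh, dotProduct_add, ZMod.val_add, ← neg_one_pow_eq_pow_mod_two, pow_add]; rfl

lemma walsh_comm (v x : Fin n → ZMod 2) : walsh v x = walsh x v := by
  rw [walsh, dotProduct_comm]; rfl

@[simp] lemma walsh_zero_left (x : Fin n → ZMod 2) : walsh 0 x = 1 := by simp [walsh]

@[simp] lemma walsh_zero_right (v : Fin n → ZMod 2) : walsh v 0 = 1 := by simp [walsh]

lemma walsh_eq_one_or_neg_one (v x : Fin n → ZMod 2) : walsh v x = 1 ∨ walsh v x = -1 :=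
  neg_one_pow_eq_or ℝ _

lemma walsh_single_one {v : Fin n → ZMod 2} {i : Fin n} (hi : v i ≠ 0) :
    walsh v (Pi.single i 1) = -1 := by
  have hvi : v i = 1 := Fin.eq_one_of_ne_zero _ hi
  simp [walsh, hvi, ZMod.val_one]

lemma sum_walsh (v : Fin n → ZMod 2) :
    ∑ x, walsh v x = if v = 0 then (2 : ℝ) ^ n else 0 := by
  split_ifs with hv
  · simp [hv]
  obtain ⟨i, hi⟩ := Function.ne_iff.mp hv
  set e : Fin n → ZMod 2 := Pi.single i 1
  have hneg : ∑ x, walsh v x = -∑ x, walsh v x := calc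
    ∑ x, walsh v x = ∑ x, walsh v (x + e) := (Equiv.sum_comp (Equiv.addRight e) (walsh v)).symm
    _ = -∑ x, walsh v x := by
      simp only [walsh_add, e, walsh_single_one hi, mul_neg_one, sum_neg_distrib]
  linarith

lemma sum_walsh_left (x : Fin n → ZMod 2) :
    ∑ v, walsh v x = if x = 0 then (2 : ℝ) ^ n else 0 := by
  simp_rw [walsh_comm _ x, sum_walsh]

noncomputable def walshTransform (f : (Fin n → ZMod 2) → ℝ) (v : Fin n → ZMod 2) : ℝ :=
  ∑ x, f x * walsh v x

lemma sum_walshTransform_mul_mul_walsh (f g : (Fin n → ZMod 2) → ℝ) (a : Fin n → ZMod 2) :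
    ∑ v, walshTransform f v * walshTransform g v * walsh v a
      = 2 ^ n * ∑ x, f x * g (x + a) := by
  have key : ∀ x y : Fin n → ZMod 2, x + y + a = 0 ↔ y = x + a := by
    intro x y
    rw [add_right_comm, add_eq_zero_iff_eq_neg, ZModModule.neg_eq_self, add_comm, eq_comm]
  calc _ = ∑ x, ∑ y, f x * g y * ∑ v, walsh v (x + y + a) := by
          simp_rw [walshTransform, sum_mul_sum, sum_mul, mul_sum, walsh_add]
          refine sum_comm.trans (sum_congr rfl fun x _ => ?_)
          refine sum_comm.trans ?_
          refine sum_congr rfl fun y _ => sum_congr rfl fun v _ => by ring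
    _ = ∑ x, f x * g (x + a) * 2 ^ n := by
          simp_rw [sum_walsh_left, key, mul_ite, mul_zero, sum_ite_eq', mem_univ, if_true]
    _ = _ := by rw [← sum_mul, mul_comm]

lemma sum_walshTransform_sq (f : (Fin n → ZMod 2) → ℝ) :
    ∑ v, walshTransform f v ^ 2 = 2 ^ n * ∑ x, f x ^ 2 := by
  simpa [sq] using sum_walshTransform_mul_mul_walsh f f 0

lemma walshTransform_zero (f : (Fin n → ZMod 2) → ℝ) : walshTransform f 0 = ∑ x, f x := by
  simp [walshTransform]

lemma sum_walshTransform_mul_mul_le (f g w : (Fin n → ZMod 2) → ℝ) (hf : ∑ x, f x = 0)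
    {B : ℝ} (hB : 0 ≤ B) (hw : ∀ v ≠ 0, |w v| ≤ B) :
    ∑ v, walshTransform f v * walshTransform g v * w v
      ≤ B * 2 ^ n * ((∑ x, f x ^ 2 + ∑ x, g x ^ 2) / 2) := by
  have hterm : ∀ v, walshTransform f v * walshTransform g v * w v
      ≤ B * ((walshTransform f v ^ 2 + walshTransform g v ^ 2) / 2) := by
    intro v
    rcases eq_or_ne v 0 with rfl | hv
    · rw [walshTransform_zero, hf, zero_mul, zero_mul]; positivity
    set a := walshTransform f v
    set b := walshTransform g v
    have hab : |a| * |b| ≤ (a ^ 2 + b ^ 2) / 2 := by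
      nlinarith [two_mul_le_add_sq |a| |b|, sq_abs a, sq_abs b]
    calc a * b * w v ≤ |a| * |b| * |w v| := by
          rw [← abs_mul, ← abs_mul]; exact le_abs_self _
      _ ≤ (a ^ 2 + b ^ 2) / 2 * B :=
          mul_le_mul hab (hw v hv) (abs_nonneg _) (by positivity)
      _ = _ := mul_comm _ _
  calc _ ≤ ∑ v, B * ((walshTransform f v ^ 2 + walshTransform g v ^ 2) / 2) :=
        sum_le_sum fun v _ => hterm v
    _ = _ := by
      rw [← mul_sum, ← sum_div, sum_add_distrib, sum_walshTransform_sq, sum_walshTransform_sq]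
      ring

lemma sum_exp_mul_walsh {v : Fin n → ZMod 2} (hv : v ≠ 0) (t : ℝ) :
    ∑ x, exp (t * walsh v x) = 2 ^ n * cosh t := by
  have hpm (x : Fin n → ZMod 2) : exp (t * walsh v x) = cosh t + walsh v x * sinh t := by
    rcases walsh_eq_one_or_neg_one v x with h | h <;> rw [h]
    · rw [mul_one, one_mul, cosh_add_sinh]
    · rw [mul_neg_one, neg_one_mul, ← sub_eq_add_neg, cosh_sub_sinh]
  simp [hpm, sum_add_distrib, ← sum_mul, sum_walsh, hv]

variable {K : Type*} [Fintype K] [DecidableEq K]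

lemma sum_exp_mul_sum_walsh {v : Fin n → ZMod 2} (hv : v ≠ 0) (t : ℝ) :
    ∑ G : K → Fin n → ZMod 2, exp (t * ∑ k, walsh v (G k))
      = (2 ^ n * cosh t) ^ Fintype.card K := by
  simp_rw [mul_sum, exp_sum]
  rw [← Fintype.prod_sum fun _ x => exp (t * walsh v x), sum_exp_mul_walsh hv, prod_const,
    card_univ]

lemma sum_cosh_mul_sum_walsh {v : Fin n → ZMod 2} (hv : v ≠ 0) (t : ℝ) :
    ∑ G : K → Fin n → ZMod 2, cosh (t * ∑ k, walsh v (G k))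
      = (2 ^ n * cosh t) ^ Fintype.card K := by
  calc _ = (∑ G : K → Fin n → ZMod 2, exp (t * ∑ k, walsh v (G k))
        + ∑ G : K → Fin n → ZMod 2, exp (-t * ∑ k, walsh v (G k))) / 2 := by
        simp only [cosh_eq, neg_mul, ← sum_add_distrib, sum_div]
    _ = _ := by rw [sum_exp_mul_sum_walsh hv, sum_exp_mul_sum_walsh hv, cosh_neg]; ring

lemma card_lt_abs_sum_walsh_le {v : Fin n → ZMod 2} (hv : v ≠ 0) {ρ : ℝ} (hρ : 0 ≤ ρ) :
    ((univ.filter fun G : K → Fin n → ZMod 2 =>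
        ρ * Fintype.card K < |∑ k, walsh v (G k)|).card : ℝ)
      ≤ 2 * (2 ^ n) ^ Fintype.card K * exp (-(ρ ^ 2 * Fintype.card K / 2)) := by
  set N := Fintype.card K
  calc _ ≤ 2 * exp (-(ρ * (ρ * N))) * (2 ^ n * cosh ρ) ^ N := by
        rw [← sum_cosh_mul_sum_walsh hv]
        exact card_lt_abs_le_exp_mul_sum_cosh _ _ hρ
    _ ≤ 2 * exp (-(ρ * (ρ * N))) * (2 ^ n * exp (ρ ^ 2 / 2)) ^ N := by
        gcongr; exact cosh_le_exp_half_sq ρ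
    _ = _ := by
        rw [mul_pow, ← exp_nat_mul, mul_left_comm, mul_assoc, ← exp_add]
        ring_nf

lemma card_exists_lt_abs_sum_walsh_le {ρ : ℝ} (hρ : 0 ≤ ρ) :
    ((univ.filter fun G : K → Fin n → ZMod 2 =>
        ∃ v ≠ 0, ρ * Fintype.card K < |∑ k, walsh v (G k)|).card : ℝ)
      ≤ 2 ^ n * (2 * (2 ^ n) ^ Fintype.card K * exp (-(ρ ^ 2 * Fintype.card K / 2))) := by
  set B := 2 * ((2 : ℝ) ^ n) ^ Fintype.card K * exp (-(ρ ^ 2 * Fintype.card K / 2))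
  have hsub : (univ.filter fun G : K → Fin n → ZMod 2 =>
        ∃ v ≠ 0, ρ * Fintype.card K < |∑ k, walsh v (G k)|)
      ⊆ (univ.filter (· ≠ 0)).biUnion fun v =>
        univ.filter fun G => ρ * Fintype.card K < |∑ k, walsh v (G k)| := by
    intro G; simp
  calc _ ≤ ∑ v ∈ univ.filter (· ≠ 0), ((univ.filter fun G : K → Fin n → ZMod 2 =>
          ρ * Fintype.card K < |∑ k, walsh v (G k)|).card : ℝ) := by
        exact_mod_cast (card_le_card hsub).trans card_biUnion_le
    _ ≤ ∑ v ∈ univ.filter (· ≠ 0), B :=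
        sum_le_sum fun v hv => card_lt_abs_sum_walsh_le (mem_filter.mp hv).2 hρ
    _ ≤ ∑ _v : Fin n → ZMod 2, B :=
        sum_le_sum_of_subset_of_nonneg (filter_subset _ _) fun _ _ _ => by positivity
    _ = _ := by simp

lemma card_forall_abs_sum_walsh_le_ge {ρ : ℝ} (hρ : 0 ≤ ρ) :
    (Fintype.card (K → Fin n → ZMod 2) : ℝ) *
        (1 - 2 ^ n * (2 * exp (-(ρ ^ 2 * Fintype.card K / 2))))
      ≤ ((univ.filter fun G : K → Fin n → ZMod 2 =>
        ∀ v ≠ 0, |∑ k, walsh v (G k)| ≤ ρ * Fintype.card K).card : ℝ) := by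
  have hcover : (univ : Finset (K → Fin n → ZMod 2))
      ⊆ (univ.filter fun G => ∀ v ≠ 0, |∑ k, walsh v (G k)| ≤ ρ * Fintype.card K)
        ∪ univ.filter fun G => ∃ v ≠ 0, ρ * Fintype.card K < |∑ k, walsh v (G k)| := by
    intro G _
    simp only [mem_union, mem_filter, mem_univ, true_and]
    by_contra! h
    obtain ⟨⟨v, hv, hlt⟩, hall⟩ := h
    exact (hall v hv).not_gt hlt
  have hT : (Fintype.card (K → Fin n → ZMod 2) : ℝ) = (2 ^ n) ^ Fintype.card K := by simp
  have hbad := card_exists_lt_abs_sum_walsh_le (K := K) (n := n) hρ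
  have hle := (Nat.cast_le (α := ℝ)).mpr ((card_le_card hcover).trans (card_union_le _ _))
  rw [card_univ, Nat.cast_add] at hle
  rw [← hT] at hbad
  linarith

end Walsh

namespace StreamCipher
open Walsh
variable {n : ℕ} {K : Type*} [Fintype K]

/-- The joint law of `(M, M + G K)` with `M` uniform on `𝔽₂ⁿ` and `K` uniform on `K`. -/
noncomputable def cipherPmf (G : K → Fin n → ZMod 2) (m c : Fin n → ZMod 2) : ℝ :=
  (2 ^ n : ℝ)⁻¹ * (Fintype.card K : ℝ)⁻¹ * (univ.filter fun k => m + G k = c).card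

lemma sum_sum_cipherPmf_mul (G : K → Fin n → ZMod 2)
    (φ : (Fin n → ZMod 2) → (Fin n → ZMod 2) → ℝ) :
    ∑ m, ∑ c, cipherPmf G m c * φ m c
      = (2 ^ n : ℝ)⁻¹ * (Fintype.card K : ℝ)⁻¹ * ∑ k, ∑ m, φ m (m + G k) := by
  simp only [cipherPmf, mul_assoc, ← mul_sum]
  rw [sum_comm (s := univ (α := K))]
  congr 2
  refine sum_congr rfl fun m _ => ?_
  simp only [card_filter, Nat.cast_sum, Nat.cast_ite, Nat.cast_one, Nat.cast_zero, sum_mul,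
    ite_mul, one_mul, zero_mul]
  rw [sum_comm]
  simp

lemma sum_sum_cipherPmf_mul_left [Nonempty K] (G : K → Fin n → ZMod 2)
    (u : (Fin n → ZMod 2) → ℝ) :
    ∑ m, ∑ c, cipherPmf G m c * u m = (2 ^ n : ℝ)⁻¹ * ∑ m, u m := by
  have hK : (Fintype.card K : ℝ) ≠ 0 := by positivity
  rw [sum_sum_cipherPmf_mul G fun m _ => u m]
  simp only [sum_const, card_univ, nsmul_eq_mul]
  field_simp

lemma sum_sum_cipherPmf_mul_right [Nonempty K] (G : K → Fin n → ZMod 2)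
    (u : (Fin n → ZMod 2) → ℝ) :
    ∑ m, ∑ c, cipherPmf G m c * u c = (2 ^ n : ℝ)⁻¹ * ∑ c, u c := by
  have hK : (Fintype.card K : ℝ) ≠ 0 := by positivity
  have shift (k : K) : ∑ m, u (m + G k) = ∑ c, u c := Equiv.sum_comp (Equiv.addRight (G k)) u
  rw [sum_sum_cipherPmf_mul G fun _ c => u c]
  simp only [shift, sum_const, card_univ, nsmul_eq_mul]
  field_simp

lemma sum_sum_cipherPmf_mul_mul (G : K → Fin n → ZMod 2) (f g : (Fin n → ZMod 2) → ℝ) :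
    ∑ m, ∑ c, cipherPmf G m c * f m * g c
      = (2 ^ n : ℝ)⁻¹ * (Fintype.card K : ℝ)⁻¹ * (2 ^ n : ℝ)⁻¹ *
        ∑ v, walshTransform f v * walshTransform g v * ∑ k, walsh v (G k) := by
  have conv (a : Fin n → ZMod 2) : ∑ m, f m * g (m + a)
      = (2 ^ n : ℝ)⁻¹ * ∑ v, walshTransform f v * walshTransform g v * walsh v a := by
    rw [sum_walshTransform_mul_mul_walsh]; field_simp
  simp_rw [mul_assoc (cipherPmf G _ _), sum_sum_cipherPmf_mul G fun m c => f m * g c, conv,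
    ← mul_sum]
  rw [mul_assoc _ (2 ^ n : ℝ)⁻¹, sum_comm]
  simp_rw [mul_sum]

theorem maxCorr_cipherPmf_le [Nonempty K] (G : K → Fin n → ZMod 2) {ρ : ℝ} (hρ : 0 ≤ ρ)
    (h : ∀ v ≠ 0, |∑ k, walsh v (G k)| ≤ ρ * Fintype.card K) :
    maxCorr (cipherPmf G) ≤ ρ := by
  refine Real.sSup_le ?_ hρ
  rintro r ⟨f, g, hf, -, hf2, hg2, rfl⟩
  rw [sum_sum_cipherPmf_mul_left, mul_eq_zero] at hf
  rw [sum_sum_cipherPmf_mul_left G fun m => f m ^ 2, inv_mul_eq_one₀ (by positivity)] at hf2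
  rw [sum_sum_cipherPmf_mul_right G fun c => g c ^ 2, inv_mul_eq_one₀ (by positivity)] at hg2
  have hbound := sum_walshTransform_mul_mul_le f g _ (hf.resolve_left (by positivity))
    (by positivity) h
  rw [← hf2, ← hg2] at hbound
  rw [sum_sum_cipherPmf_mul_mul]
  calc _ ≤ (2 ^ n : ℝ)⁻¹ * (Fintype.card K : ℝ)⁻¹ * (2 ^ n : ℝ)⁻¹ *
        (ρ * Fintype.card K * 2 ^ n * ((2 ^ n + 2 ^ n) / 2)) := by
        gcongr
    _ = ρ := by field_simp; ring

lemma four_mul_add_logb_le {s : ℕ} (hn : 1 ≤ n) {ρ ε : ℝ} (hρ : 0 < ρ)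
    (hL : 0 ≤ logb 2 (1 / ε))
    (hkey : 2 * logb 2 (1 / ρ) + logb 2 (n : ℝ) +
        logb 2 (1 + (1 / (n : ℝ)) * logb 2 (1 / ε)) + 2 ≤ (s : ℝ)) :
    4 * (n + logb 2 (1 / ε)) ≤ ρ ^ 2 * 2 ^ s := by
  set L := logb 2 (1 / ε)
  have hn0 : (0 : ℝ) < n := by exact_mod_cast hn
  have hB : 0 < 1 + 1 / (n : ℝ) * L := by positivity
  have hlog : logb 2 (4 * (n + L) / ρ ^ 2) ≤ s := by
    convert hkey using 1
    rw [show 4 * (n + L) / ρ ^ 2 = (1 / ρ) ^ 2 * n * (1 + 1 / (n : ℝ) * L) * 2 ^ 2 by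
      field_simp; ring]
    rw [logb_mul (by positivity) (by positivity), logb_mul (by positivity) (by positivity),
      logb_mul (by positivity) (by positivity), logb_pow, logb_pow, logb_self_eq_one one_lt_two]
    push_cast; ring
  rw [logb_le_iff_le_rpow one_lt_two (by positivity), rpow_natCast,
    div_le_iff₀ (by positivity)] at hlog
  linarith

lemma two_pow_mul_exp_lt (hn : 1 ≤ n) {ε x : ℝ} (hε : 0 < ε)
    (hL : 0 ≤ logb 2 (1 / ε)) (hx : 2 * (n + logb 2 (1 / ε)) ≤ x) :
    2 ^ n * (2 * exp (-x)) < ε := by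
  have h2e : (2 : ℝ) < exp 1 := by linarith [add_one_lt_exp one_ne_zero]
  have hpow : (2 : ℝ) ^ n ≤ exp n := by
    rw [← exp_one_pow]; gcongr
  have hεL : exp (-(2 * logb 2 (1 / ε))) ≤ ε := by
    have hlog2 : log 2 < 2 := by linarith [log_two_lt_d9]
    calc exp (-(2 * logb 2 (1 / ε))) ≤ exp (-(logb 2 (1 / ε) * log 2)) :=
          exp_le_exp.mpr (by nlinarith)
      _ = ε := by
        rw [← log_div_log, div_mul_cancel₀ _ (log_pos one_lt_two).ne', one_div, log_inv,
          neg_neg, exp_log hε]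
  have hn1 : exp (-(n : ℝ)) ≤ exp (-1) := by gcongr; exact_mod_cast hn
  have h2 : 2 * exp (-1) < 1 := by
    rw [exp_neg, ← div_eq_mul_inv, div_lt_one (exp_pos 1)]; exact h2e
  calc 2 ^ n * (2 * exp (-x)) ≤ exp n * (2 * exp (-(2 * n) + -(2 * logb 2 (1 / ε)))) := by
        gcongr; linarith
    _ = 2 * exp (-(n : ℝ)) * exp (-(2 * logb 2 (1 / ε))) := by
        have h : exp (n : ℝ) * exp (-(2 * n)) = exp (-n) := by rw [← exp_add]; ring_nf
        rw [exp_add]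
        linear_combination 2 * exp (-(2 * logb 2 (1 / ε))) * h
    _ ≤ 2 * exp (-1) * ε := by gcongr
    _ < ε := by nlinarith

end StreamCipher

open Walsh StreamCipher

theorem stmt11_general (n s : ℕ) (hn : 1 ≤ n) (ρ ε : ℝ) (hρ : 0 < ρ) (hε : 0 < ε)
    (hkey : 2 * Real.logb 2 (1 / ρ) + Real.logb 2 (n : ℝ) +
        Real.logb 2 (1 + (1 / (n : ℝ)) * Real.logb 2 (1 / ε)) + 2 ≤ (s : ℝ)) :
    1 - ε < ((univ.filter fun G : Fin (2 ^ s) → Fin n → ZMod 2 =>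
        maxCorr (fun (m c : Fin n → ZMod 2) =>
          ((2 ^ n : ℝ))⁻¹ * ((2 ^ s : ℝ))⁻¹ *
            ((univ.filter fun k => m + G k = c).card : ℝ)) ≤ ρ).card : ℝ) /
      (Fintype.card (Fin (2 ^ s) → Fin n → ZMod 2) : ℝ) := by
  rcases lt_or_ge 1 ε with hε1 | hε1
  · exact (sub_neg.mpr hε1).trans_le (by positivity)
  have hL : 0 ≤ logb 2 (1 / ε) := logb_nonneg one_lt_two (by rw [le_div_iff₀ hε]; linarith)
  have hsmall : 2 ^ n * (2 * exp (-(ρ ^ 2 * Fintype.card (Fin (2 ^ s)) / 2))) < ε := by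
    refine two_pow_mul_exp_lt hn hε hL ?_
    rw [Fintype.card_fin, Nat.cast_pow, Nat.cast_ofNat]
    linarith [four_mul_add_logb_le hn hρ hL hkey]
  have hT : (0 : ℝ) < Fintype.card (Fin (2 ^ s) → Fin n → ZMod 2) := by positivity
  rw [lt_div_iff₀ hT]
  calc (1 - ε) * Fintype.card (Fin (2 ^ s) → Fin n → ZMod 2)
      < Fintype.card (Fin (2 ^ s) → Fin n → ZMod 2) *
          (1 - 2 ^ n * (2 * exp (-(ρ ^ 2 * Fintype.card (Fin (2 ^ s)) / 2)))) := by
        nlinarith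
    _ ≤ _ := card_forall_abs_sum_walsh_le_ge hρ.le
    _ ≤ _ := by
        refine Nat.mono_cast (card_le_card (monotone_filter_right _ fun G _ hG => ?_))
        convert maxCorr_cipherPmf_le G hρ.le hG using 2
        ext m c
        simp [cipherPmf]

theorem stmt11 (n s : ℕ) (hn : 1 ≤ n) (hs : 1 ≤ s) (ρ ε : ℝ) (hρ : 0 < ρ) (hε : 0 < ε)
    (hkey : 2 * Real.logb 2 (1 / ρ) + Real.logb 2 (n : ℝ) +
        Real.logb 2 (1 + (1 / (n : ℝ)) * Real.logb 2 (1 / ε)) + 2 ≤ (s : ℝ)) :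
    1 - ε < ((univ.filter fun G : Fin (2 ^ s) → Fin n → ZMod 2 =>
        maxCorr (fun (m c : Fin n → ZMod 2) =>
          ((2 ^ n : ℝ))⁻¹ * ((2 ^ s : ℝ))⁻¹ *
            ((univ.filter fun k => m + G k = c).card : ℝ)) ≤ ρ).card : ℝ) /
      (Fintype.card (Fin (2 ^ s) → Fin n → ZMod 2) : ℝ) :=
  stmt11_general n s hn ρ ε hρ hε hkey
end
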